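/- arXiv:1212.5321 — 3 statements merged into one kernel-verified Lean document; each statement's English description precedes it below -/
import Mathlib

section
/- Let $A, B \in \mathbb{R}^{p\times p}$ be positive semi-definite symmetric matrices. Write $A - B = O D O^\top$ with $O$ orthogonal and $D = \operatorname{diag}(\lambda_1,\dots,\lambda_p)$, and set $D^+ = \operatorname{diag}(|\lambda_1|,\dots,|\lambda_p|)$. Then $O D^+ O^\top \preceq A + 2\|B\|_2 I_p$, i.e. $A + 2\|B\|_2 I_p - O D^+ O^\top$ is positive semi-definite. -/
open Matrix

/-- The ℓ²→ℓ² operator norm of a real square matrix. -/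
noncomputable def matOpNorm {p : ℕ} (M : Matrix (Fin p) (Fin p) ℝ) : ℝ :=
  ‖Matrix.toEuclideanCLM (𝕜 := ℝ) M‖

/-!
With `c = ‖B‖₂` we have `B ⪯ c I`, so `A - B ⪰ -c I` and every eigenvalue `λᵢ` of `A - B`
is at least `-c`. Hence `|λᵢ| ≤ λᵢ + 2c`, and conjugating by `O` gives
`O D⁺ Oᵀ ⪯ (A - B) + 2c I ⪯ A + 2c I`.
-/

open scoped MatrixOrder

namespace Matrix

variable {n : Type*} [Fintype n] [DecidableEq n]

lemma dotProduct_mulVec_le_norm_toEuclideanCLM_mul (B : Matrix n n ℝ) (x : n → ℝ) :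
    x ⬝ᵥ B *ᵥ x ≤ ‖toEuclideanCLM (𝕜 := ℝ) B‖ * (x ⬝ᵥ x) := by
  set y : EuclideanSpace ℝ n := WithLp.toLp 2 x
  calc x ⬝ᵥ B *ᵥ x = inner ℝ y (toEuclideanCLM (𝕜 := ℝ) B y) := (inner_toEuclideanCLM B y y).symm
    _ ≤ ‖y‖ * ‖toEuclideanCLM (𝕜 := ℝ) B y‖ := real_inner_le_norm _ _
    _ ≤ ‖y‖ * (‖toEuclideanCLM (𝕜 := ℝ) B‖ * ‖y‖) := by
        gcongr; exact (toEuclideanCLM (𝕜 := ℝ) B).le_opNorm y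
    _ = ‖toEuclideanCLM (𝕜 := ℝ) B‖ * inner ℝ y y := by rw [real_inner_self_eq_norm_sq]; ring
    _ = ‖toEuclideanCLM (𝕜 := ℝ) B‖ * (x ⬝ᵥ x) := by
        rw [EuclideanSpace.inner_toLp_toLp, star_trivial]

lemma IsHermitian.le_norm_toEuclideanCLM_smul_one {B : Matrix n n ℝ} (hB : B.IsHermitian) :
    B ≤ ‖toEuclideanCLM (𝕜 := ℝ) B‖ • (1 : Matrix n n ℝ) := by
  rw [le_iff, posSemidef_iff_dotProduct_mulVec]
  refine ⟨(isHermitian_one.smul (.all _)).sub hB, fun x => ?_⟩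
  have := dotProduct_mulVec_le_norm_toEuclideanCLM_mul B x
  simp only [star_trivial, sub_mulVec, smul_mulVec, one_mulVec, dotProduct_sub, dotProduct_smul,
    smul_eq_mul]
  linarith

variable {O : Matrix n n ℝ}

lemma conj_diagonal_nonneg_iff (hO : O ∈ orthogonalGroup n ℝ) {d : n → ℝ} :
    0 ≤ O * diagonal d * Oᵀ ↔ 0 ≤ d := by
  rw [← conjTranspose_eq_transpose_of_trivial O, ← star_eq_conjTranspose,
    (Unitary.isUnit_coe (U := ⟨O, hO⟩)).star_right_conjugate_nonneg_iff, nonneg_iff_posSemidef,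
    posSemidef_diagonal_iff]
  rfl

lemma conj_diagonal_add (d e : n → ℝ) :
    O * diagonal d * Oᵀ + O * diagonal e * Oᵀ = O * diagonal (d + e) * Oᵀ := by
  rw [← Matrix.add_mul, ← Matrix.mul_add, diagonal_add]
  rfl

lemma conj_diagonal_sub (d e : n → ℝ) :
    O * diagonal d * Oᵀ - O * diagonal e * Oᵀ = O * diagonal (d - e) * Oᵀ := by
  rw [← Matrix.sub_mul, ← Matrix.mul_sub, diagonal_sub]
  rfl

lemma conj_diagonal_le_conj_diagonal_iff (hO : O ∈ orthogonalGroup n ℝ) {d e : n → ℝ} :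
    O * diagonal d * Oᵀ ≤ O * diagonal e * Oᵀ ↔ d ≤ e := by
  rw [← sub_nonneg, conj_diagonal_sub, conj_diagonal_nonneg_iff hO, sub_nonneg]

lemma smul_one_eq_conj_diagonal (hO : O ∈ orthogonalGroup n ℝ) (c : ℝ) :
    c • (1 : Matrix n n ℝ) = O * diagonal (fun _ => c) * Oᵀ := by
  rw [← smul_one_eq_diagonal, Matrix.mul_smul, Matrix.mul_one, Matrix.smul_mul,
    ← conjTranspose_eq_transpose_of_trivial O, ← star_eq_conjTranspose,
    mem_unitaryGroup_iff.mp hO]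

theorem conj_diagonal_abs_le_add_smul_one {A B : Matrix n n ℝ} {lam : n → ℝ} {c : ℝ}
    (hA : 0 ≤ A) (hB : 0 ≤ B) (hBc : B ≤ c • 1) (hc : 0 ≤ c) (hO : O ∈ orthogonalGroup n ℝ)
    (hdec : A - B = O * diagonal lam * Oᵀ) :
    O * diagonal (fun i => |lam i|) * Oᵀ ≤ A + (2 * c) • 1 := by
  have hlam : ∀ i, -c ≤ lam i := by
    have : -(c • 1) ≤ A - B := by simpa using sub_le_sub hA hBc
    rwa [← neg_smul, hdec, smul_one_eq_conj_diagonal hO,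
      conj_diagonal_le_conj_diagonal_iff hO, Pi.le_def] at this
  calc O * diagonal (fun i => |lam i|) * Oᵀ
      ≤ O * diagonal (lam + fun _ => 2 * c) * Oᵀ := by
        rw [conj_diagonal_le_conj_diagonal_iff hO]
        intro i
        have := hlam i
        rcases abs_cases (lam i) with ⟨h, _⟩ | ⟨h, _⟩ <;> simp only [Pi.add_apply] <;> linarith
    _ = A - B + (2 * c) • 1 := by rw [hdec, smul_one_eq_conj_diagonal hO, conj_diagonal_add]
    _ ≤ A + (2 * c) • 1 := by gcongr; exact sub_le_self A hB

end Matrix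

/-- If `A, B` are psd and `A - B = O D Oᵀ` with `O` orthogonal and `D` diagonal, then
`O D⁺ Oᵀ ⪯ A + 2‖B‖₂ I`. -/
theorem stmt3 (p : ℕ) (A B : Matrix (Fin p) (Fin p) ℝ)
    (hA : A.PosSemidef) (hB : B.PosSemidef)
    (O : Matrix (Fin p) (Fin p) ℝ) (hO : O ∈ Matrix.orthogonalGroup (Fin p) ℝ)
    (lam : Fin p → ℝ) (hdec : A - B = O * Matrix.diagonal lam * Oᵀ) :
    (A + (2 * matOpNorm B) • (1 : Matrix (Fin p) (Fin p) ℝ)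
      - O * Matrix.diagonal (fun i => |lam i|) * Oᵀ).PosSemidef :=
  conj_diagonal_abs_le_add_smul_one hA.nonneg hB.nonneg
    hB.isHermitian.le_norm_toEuclideanCLM_smul_one (norm_nonneg _) hO hdec
end

section
/- Let $A, B \in \mathbb{R}^{p\times p}$ be positive semi-definite symmetric matrices and $u \in \mathbb{R}^p$. Then for any positive integer $d$, $u^\top (A-B)^d u \le \|A-B\|_2^{d-1} \left( u^\top A u + 2\|B\|_2 \|u\|^2 \right)$. -/
/-!
Every eigenvalue `λ` of `A - B` satisfies `|λ| ≤ ‖A - B‖₂` and, since `A - B ≥ -B ≥ -‖B‖₂`,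
also `λ ≥ -‖B‖₂`; hence `|λ| ≤ λ + 2‖B‖₂` and `λ ^ d ≤ ‖A - B‖₂ ^ (d - 1) (λ + 2‖B‖₂)`.
The continuous functional calculus turns this scalar inequality into the Loewner inequality
`(A - B) ^ d ≤ ‖A - B‖₂ ^ (d - 1) (A - B + 2‖B‖₂)`, and pairing with `u` (using `uᵀBu ≥ 0`)
gives the claim.
-/

open Matrix

lemma pow_le_pow_pred_mul_of_abs_le {R : Type*} [Ring R] [LinearOrder R] [IsStrictOrderedRing R]
    {x ν y : R} {d : ℕ} (hd : d ≠ 0) (hν : |x| ≤ ν) (hy : |x| ≤ y) :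
    x ^ d ≤ ν ^ (d - 1) * y := by
  obtain ⟨k, rfl⟩ := Nat.exists_eq_succ_of_ne_zero hd
  calc x ^ (k + 1) ≤ |x| ^ (k + 1) := (le_abs_self _).trans (abs_pow x _).le
    _ = |x| ^ k * |x| := pow_succ _ _
    _ ≤ ν ^ k * y :=
      mul_le_mul (pow_le_pow_left₀ (abs_nonneg x) hν k) hy (abs_nonneg x)
        (pow_nonneg ((abs_nonneg x).trans hν) k)

section CFC

variable {A : Type*} [TopologicalSpace A] [Ring A] [StarRing A] [PartialOrder A]
  [StarOrderedRing A] [Algebra ℝ A] [ContinuousFunctionalCalculus ℝ A IsSelfAdjoint]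

lemma pow_le_smul_add_algebraMap {a : A} (ha : IsSelfAdjoint a) {ν c : ℝ} {d : ℕ} (hd : d ≠ 0)
    (hν : ∀ x ∈ spectrum ℝ a, |x| ≤ ν) (hc : ∀ x ∈ spectrum ℝ a, -c ≤ x) (hc₀ : 0 ≤ c) :
    a ^ d ≤ ν ^ (d - 1) • (a + algebraMap ℝ A (2 * c)) := by
  have key : cfc (· ^ d : ℝ → ℝ) a ≤ cfc (fun x => ν ^ (d - 1) * (x + 2 * c)) a :=
    cfc_mono fun x hx => pow_le_pow_pred_mul_of_abs_le hd (hν x hx) (by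
      have := hc x hx; cases abs_cases x <;> linarith)
  rwa [cfc_pow_id a d, cfc_const_mul _ _ a, cfc_add a (fun x => x) (fun _ => 2 * c), cfc_id' ℝ a,
    cfc_const (2 * c) a] at key

end CFC

lemma abs_le_matOpNorm_of_mem_spectrum {p : ℕ} {M : Matrix (Fin p) (Fin p) ℝ} {x : ℝ}
    (hx : x ∈ spectrum ℝ M) : |x| ≤ matOpNorm M := by
  rw [← AlgEquiv.spectrum_eq (Matrix.toEuclideanCLM (𝕜 := ℝ) (n := Fin p)) M] at hx
  cases isEmpty_or_nonempty (Fin p)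
  · simp [spectrum.of_subsingleton] at hx
  · exact spectrum.norm_le_norm_of_mem hx

open scoped MatrixOrder in
lemma dotProduct_mulVec_mono {n : Type*} [Fintype n] {X Y : Matrix n n ℝ} (h : X ≤ Y) (u : n → ℝ) :
    u ⬝ᵥ X *ᵥ u ≤ u ⬝ᵥ Y *ᵥ u := by
  have := (Matrix.le_iff.mp h).dotProduct_mulVec_nonneg u
  simpa [sub_mulVec, dotProduct_sub, sub_nonneg] using this

section MatrixOrder

open scoped MatrixOrder

variable {p : ℕ} {A B : Matrix (Fin p) (Fin p) ℝ}

lemma le_algebraMap_matOpNorm (hB : B.IsHermitian) : B ≤ algebraMap ℝ _ (matOpNorm B) :=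
  le_algebraMap_of_spectrum_le
    (fun _ hx => (le_abs_self _).trans (abs_le_matOpNorm_of_mem_spectrum hx)) hB.isSelfAdjoint

lemma sub_pow_le_of_posSemidef (hA : A.PosSemidef) (hB : B.PosSemidef) {d : ℕ} (hd : d ≠ 0) :
    (A - B) ^ d ≤ matOpNorm (A - B) ^ (d - 1) • (A - B + algebraMap ℝ _ (2 * matOpNorm B)) := by
  have hM : IsSelfAdjoint (A - B) := (hA.1.sub hB.1).isSelfAdjoint
  have hlow : algebraMap ℝ _ (-matOpNorm B) ≤ A - B := by
    simpa using sub_le_sub hA.nonneg (le_algebraMap_matOpNorm hB.1)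
  exact pow_le_smul_add_algebraMap hM hd (fun _ => abs_le_matOpNorm_of_mem_spectrum)
    ((algebraMap_le_iff_le_spectrum hM).mp hlow) (norm_nonneg _)

end MatrixOrder

/-- For psd matrices `A, B` and any vector `u`,
`uᵀ(A-B)^d u ≤ ‖A-B‖₂^{d-1} (uᵀAu + 2‖B‖₂‖u‖²)`. -/
theorem stmt4 (p : ℕ) (A B : Matrix (Fin p) (Fin p) ℝ)
    (hA : A.PosSemidef) (hB : B.PosSemidef) (u : Fin p → ℝ) (d : ℕ) (hd : 0 < d) :
    u ⬝ᵥ ((A - B) ^ d).mulVec u ≤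
      (matOpNorm (A - B)) ^ (d - 1) *
        (u ⬝ᵥ A.mulVec u + 2 * matOpNorm B * (∑ i, (u i) ^ 2)) := by
  have hBu : 0 ≤ u ⬝ᵥ B *ᵥ u := by simpa using hB.dotProduct_mulVec_nonneg u
  calc u ⬝ᵥ ((A - B) ^ d) *ᵥ u
      ≤ u ⬝ᵥ (matOpNorm (A - B) ^ (d - 1) •
          (A - B + algebraMap ℝ _ (2 * matOpNorm B))) *ᵥ u :=
        dotProduct_mulVec_mono (sub_pow_le_of_posSemidef hA hB hd.ne') u
    _ = matOpNorm (A - B) ^ (d - 1) *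
          (u ⬝ᵥ A *ᵥ u - u ⬝ᵥ B *ᵥ u + 2 * matOpNorm B * ∑ i, u i ^ 2) := by
        rw [show ∑ i, u i ^ 2 = u ⬝ᵥ u by simp [dotProduct, sq]]
        simp only [smul_mulVec, add_mulVec, sub_mulVec, Algebra.algebraMap_eq_smul_one, one_mulVec,
          dotProduct_smul, dotProduct_add, dotProduct_sub, smul_eq_mul]
    _ ≤ _ := mul_le_mul_of_nonneg_left (by linarith) (pow_nonneg (norm_nonneg _) _)
end

section
/- Let $A = [\phi_1,\dots,\phi_N]$ be an $m\times N$ real matrix of full column rank whose columns are nearly orthonormal: $|\phi_{k_1}^\top \phi_{k_2} - \delta_{k_1,k_2}| \le C k^{\gamma}/m$ with $k = \max(k_1,k_2)$, for a constant $C > 0$, $\gamma \ge 0$, and suppose $12 C N^{1+\gamma} \le m$. Then the Gram-Schmidt QR decomposition $A = QR$ (with $Q$ having orthonormal columns and $R$ upper triangular with positive diagonal) satisfies: $|R_{kk} - 1| \le 4CN^{1+\gamma}/m + 3CN^{\gamma}/m$ for all $k \le N$, and $|R_{kj}| \le 3Cj^{\gamma}/m$ for all $k < j \le N$. -/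
open Finset

/-- Stability of the Gram–Schmidt QR decomposition for nearly orthonormal columns
(1-indexed bounds): if `|⟨φ_{k₁}, φ_{k₂}⟩ - δ_{k₁k₂}| ≤ C max(k₁,k₂)^γ/m` and
`12 C N^{1+γ} ≤ m`, then the QR factor `R` (upper triangular, positive diagonal,
`Q` with orthonormal columns) satisfies `|R_{kk} - 1| ≤ 4CN^{1+γ}/m + 3CN^γ/m`
and `|R_{kj}| ≤ 3Cj^γ/m` for `k < j`. -/
theorem stmt14 (m N : ℕ) (hm : 0 < m) (C γ : ℝ) (hC : 0 < C) (hγ : 0 ≤ γ)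
    (φ : Fin N → Fin m → ℝ)
    (hrank : LinearIndependent ℝ φ)
    (hortho : ∀ k1 k2 : Fin N,
      |(∑ i, φ k1 i * φ k2 i) - (if k1 = k2 then (1 : ℝ) else 0)| ≤
        C * ((max (k1 : ℕ) (k2 : ℕ) + 1 : ℕ) : ℝ) ^ γ / m)
    (hsmall : 12 * C * ((N : ℝ)) ^ ((1 : ℝ) + γ) ≤ m)
    (Q : Fin N → Fin m → ℝ) (R : Matrix (Fin N) (Fin N) ℝ)
    (hQortho : ∀ k1 k2 : Fin N,
      (∑ i, Q k1 i * Q k2 i) = (if k1 = k2 then (1 : ℝ) else 0))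
    (hRtri : ∀ k j : Fin N, (j : ℕ) < (k : ℕ) → R k j = 0)
    (hRdiagpos : ∀ k : Fin N, 0 < R k k)
    (hQR : ∀ (j : Fin N) (i : Fin m), φ j i = ∑ k, R k j * Q k i) :
    (∀ k : Fin N, |R k k - 1| ≤
        4 * C * ((N : ℝ)) ^ ((1 : ℝ) + γ) / m + 3 * C * ((N : ℝ)) ^ γ / m) ∧
    (∀ k j : Fin N, (k : ℕ) < (j : ℕ) →
        |R k j| ≤ 3 * C * (((j : ℕ) + 1 : ℕ) : ℝ) ^ γ / m) := by
  have hm' : (0 : ℝ) < m := by exact_mod_cast hm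
  set ε : Fin N → ℝ := fun k => C * (((k : ℕ) + 1 : ℕ) : ℝ) ^ γ / m with hεdef
  -- basic positivity / size facts
  have hbase_pos : ∀ k : Fin N, (0 : ℝ) < (((k : ℕ) + 1 : ℕ) : ℝ) := by
    intro k; push_cast; positivity
  have hbase_one : ∀ k : Fin N, (1 : ℝ) ≤ (((k : ℕ) + 1 : ℕ) : ℝ) := by
    intro k; push_cast; linarith [Nat.cast_nonneg (α := ℝ) (k : ℕ)]
  have hbaseN : ∀ k : Fin N, (((k : ℕ) + 1 : ℕ) : ℝ) ≤ (N : ℝ) := by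
    intro k; exact_mod_cast Nat.succ_le_of_lt k.isLt
  have hN1 : ∀ _ : Fin N, (1 : ℝ) ≤ (N : ℝ) := fun k => le_trans (hbase_one k) (hbaseN k)
  have hε_pos : ∀ k : Fin N, 0 < ε k := by
    intro k
    exact div_pos (mul_pos hC (Real.rpow_pos_of_pos (hbase_pos k) γ)) hm'
  -- the crucial smallness facts
  have hpow1 : ∀ k : Fin N, (((k : ℕ) + 1 : ℕ) : ℝ) ^ ((1 : ℝ) + γ) ≤ (N : ℝ) ^ ((1 : ℝ) + γ) := by
    intro k
    exact Real.rpow_le_rpow (le_of_lt (hbase_pos k)) (hbaseN k) (by linarith)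
  have hsplitpow : ∀ k : Fin N, (((k : ℕ) + 1 : ℕ) : ℝ) ^ ((1 : ℝ) + γ)
      = (((k : ℕ) + 1 : ℕ) : ℝ) * (((k : ℕ) + 1 : ℕ) : ℝ) ^ γ := by
    intro k
    rw [Real.rpow_add (hbase_pos k), Real.rpow_one]
  have hdiv : ∀ x : ℝ, x ≤ (N : ℝ) ^ ((1 : ℝ) + γ) → C * x / m ≤ 1 / 12 := by
    intro x hx
    rw [div_le_div_iff₀ hm' (by norm_num)]
    have : 12 * (C * x) ≤ 12 * C * (N : ℝ) ^ ((1:ℝ)+γ) := by nlinarith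
    linarith
  have hkε : ∀ k : Fin N, ((k : ℕ) : ℝ) * ε k ≤ 1 / 12 := by
    intro k
    have h1 : ((k : ℕ) : ℝ) * (((k : ℕ) + 1 : ℕ) : ℝ) ^ γ ≤ (N : ℝ) ^ ((1 : ℝ) + γ) := by
      calc ((k : ℕ) : ℝ) * (((k : ℕ) + 1 : ℕ) : ℝ) ^ γ
          ≤ (((k : ℕ) + 1 : ℕ) : ℝ) * (((k : ℕ) + 1 : ℕ) : ℝ) ^ γ := by
            have : ((k : ℕ) : ℝ) ≤ (((k : ℕ) + 1 : ℕ) : ℝ) := by push_cast; linarith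
            exact mul_le_mul_of_nonneg_right this (le_of_lt (Real.rpow_pos_of_pos (hbase_pos k) γ))
        _ = (((k : ℕ) + 1 : ℕ) : ℝ) ^ ((1 : ℝ) + γ) := (hsplitpow k).symm
        _ ≤ (N : ℝ) ^ ((1 : ℝ) + γ) := hpow1 k
    have := hdiv _ h1
    calc ((k : ℕ) : ℝ) * ε k = C * (((k : ℕ) : ℝ) * (((k : ℕ) + 1 : ℕ) : ℝ) ^ γ) / m := by
          rw [hεdef]; ring
      _ ≤ 1 / 12 := this
  have hε12 : ∀ k : Fin N, ε k ≤ 1 / 12 := by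
    intro k
    have h1 : (((k : ℕ) + 1 : ℕ) : ℝ) ^ γ ≤ (N : ℝ) ^ ((1 : ℝ) + γ) := by
      calc (((k : ℕ) + 1 : ℕ) : ℝ) ^ γ
          ≤ (((k : ℕ) + 1 : ℕ) : ℝ) ^ ((1 : ℝ) + γ) := by
            exact Real.rpow_le_rpow_of_exponent_le (hbase_one k) (by linarith)
        _ ≤ (N : ℝ) ^ ((1 : ℝ) + γ) := hpow1 k
    exact hdiv _ h1
  -- Gram matrix identity
  have gram : ∀ a b : Fin N, (∑ i, φ a i * φ b i) = ∑ k, R k a * R k b := by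
    intro a b
    calc (∑ i, φ a i * φ b i)
        = ∑ i, ∑ k, ∑ l, (R k a * Q k i) * (R l b * Q l i) := by
          simp_rw [hQR, Finset.sum_mul_sum]
      _ = ∑ k, ∑ l, ∑ i, (R k a * Q k i) * (R l b * Q l i) := by
          rw [Finset.sum_comm]
          exact Finset.sum_congr rfl fun k _ => Finset.sum_comm
      _ = ∑ k, ∑ l, R k a * R l b * (if k = l then (1 : ℝ) else 0) := by
          refine Finset.sum_congr rfl fun k _ => Finset.sum_congr rfl fun l _ => ?_
          rw [← hQortho k l, Finset.mul_sum]
          exact Finset.sum_congr rfl fun i _ => by ring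
      _ = ∑ k, R k a * R k b := by
          refine Finset.sum_congr rfl fun k _ => ?_
          simp [mul_ite]
  -- split the Gram sum at the diagonal
  have hsplit : ∀ a b : Fin N, (a : ℕ) ≤ (b : ℕ) →
      (∑ i, φ a i * φ b i) = R a a * R a b + ∑ l ∈ Finset.Iio a, R l a * R l b := by
    intro a b hab
    rw [gram a b]
    rw [← Finset.sum_subset (Finset.subset_univ (Finset.Iic a)) (by
      intro x _ hx
      have : (a : ℕ) < (x : ℕ) := by
        have hxa : ¬ x ≤ a := by simpa using hx
        exact lt_of_not_ge fun h => hxa (Fin.le_def.mpr h)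
      rw [hRtri x a this, zero_mul])]
    rw [← Finset.Iio_insert, Finset.sum_insert (by simp)]
  -- bound on the off-diagonal partial sums
  have hsum_bound : ∀ a b : Fin N, (∀ l : Fin N, (l : ℕ) < (a : ℕ) → |R l a| ≤ 3 * ε a) →
      (∀ l : Fin N, (l : ℕ) < (a : ℕ) → |R l b| ≤ 3 * ε b) →
      |∑ l ∈ Finset.Iio a, R l a * R l b| ≤ ((a : ℕ) : ℝ) * (3 * ε a * (3 * ε b)) := by
    intro a b ha hb
    calc |∑ l ∈ Finset.Iio a, R l a * R l b| ≤ ∑ l ∈ Finset.Iio a, |R l a * R l b| :=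
          Finset.abs_sum_le_sum_abs _ _
      _ ≤ ∑ _l ∈ Finset.Iio a, 3 * ε a * (3 * ε b) := by
          refine Finset.sum_le_sum fun l hl => ?_
          have hl' : (l : ℕ) < (a : ℕ) := Fin.lt_def.mp (Finset.mem_Iio.mp hl)
          rw [abs_mul]
          exact mul_le_mul (ha l hl') (hb l hl') (abs_nonneg _)
            (by positivity)
      _ = ((a : ℕ) : ℝ) * (3 * ε a * (3 * ε b)) := by
          rw [Finset.sum_const, nsmul_eq_mul]
          simp
  -- diagonal bound from the off-diagonal bounds of the same column
  have diag : ∀ k : Fin N, (∀ l : Fin N, (l : ℕ) < (k : ℕ) → |R l k| ≤ 3 * ε k) →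
      |R k k - 1| ≤ 7 / 4 * ε k := by
    intro k hoff
    have hg : |(∑ i, φ k i * φ k i) - 1| ≤ ε k := by
      have := hortho k k
      simpa [hεdef] using this
    have hs := hsplit k k le_rfl
    have hS := hsum_bound k k hoff hoff
    have hSnn : 0 ≤ ∑ l ∈ Finset.Iio k, R l k * R l k :=
      Finset.sum_nonneg fun l _ => mul_self_nonneg _
    have hkk := hkε k
    have hεk := hε_pos k
    have h2 : |R k k * R k k - 1| ≤ 7 / 4 * ε k := by
      have hSle : ∑ l ∈ Finset.Iio k, R l k * R l k ≤ 3 / 4 * ε k := by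
        have := (abs_le.mp hS).2
        nlinarith
      rw [abs_le] at hg ⊢
      constructor <;> nlinarith [hg.1, hg.2]
    have hpos := hRdiagpos k
    rw [abs_le] at h2 ⊢
    constructor <;> nlinarith [hε12 k, sq_nonneg (R k k - 1), sq_nonneg (R k k + 1)]
  -- main induction on the row index
  have main : ∀ n : ℕ, ∀ k j : Fin N, (k : ℕ) = n → (k : ℕ) < (j : ℕ) → |R k j| ≤ 3 * ε j := by
    intro n
    induction n using Nat.strong_induction_on with
    | _ n ih =>
      intro k j hkn hkj
      subst hkn
      have hoffk : ∀ l : Fin N, (l : ℕ) < (k : ℕ) → |R l k| ≤ 3 * ε k :=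
        fun l hl => ih (l : ℕ) hl l k rfl hl
      have hoffj : ∀ l : Fin N, (l : ℕ) < (k : ℕ) → |R l j| ≤ 3 * ε j :=
        fun l hl => ih (l : ℕ) hl l j rfl (hl.trans hkj)
      have hdk := diag k hoffk
      have hRkk : 41 / 48 ≤ R k k := by
        have h12 := hε12 k
        have := (abs_le.mp hdk).1
        nlinarith [hε_pos k]
      have hne : k ≠ j := fun h => absurd (h ▸ hkj) (lt_irrefl _)
      have hg : |∑ i, φ k i * φ j i| ≤ ε j := by
        have h := hortho k j
        have hmax : max (k : ℕ) (j : ℕ) = (j : ℕ) := Nat.max_eq_right hkj.le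
        simpa [hne, hmax, hεdef] using h
      have hs := hsplit k j hkj.le
      have hS := hsum_bound k j hoffk hoffj
      have hkk := hkε k
      have hεj := hε_pos j
      have hεk := hε_pos k
      have h2 : |R k k * R k j| ≤ 7 / 4 * ε j := by
        have h3 : R k k * R k j
            = (∑ i, φ k i * φ j i) - ∑ l ∈ Finset.Iio k, R l k * R l j := by
          linarith [hs]
        rw [h3]
        have habs : |(∑ i, φ k i * φ j i) - ∑ l ∈ Finset.Iio k, R l k * R l j|
            ≤ |∑ i, φ k i * φ j i| + |∑ l ∈ Finset.Iio k, R l k * R l j| := by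
          rw [sub_eq_add_neg]
          exact (abs_add_le _ _).trans (by rw [abs_neg])
        have h5 : ((k : ℕ) : ℝ) * (3 * ε k * (3 * ε j)) = 9 * (((k : ℕ) : ℝ) * ε k) * ε j := by
          ring
        have h6 : 9 * (((k : ℕ) : ℝ) * ε k) * ε j ≤ 9 * (1 / 12) * ε j := by
          have := mul_le_mul_of_nonneg_right hkk (le_of_lt hεj)
          linarith
        have h7 := (abs_le.mp hS).2
        linarith [habs, hg]
      have h4 : R k k * |R k j| = |R k k * R k j| := by
        rw [abs_mul, abs_of_pos (hRdiagpos k)]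
      have h8 := mul_le_mul_of_nonneg_right hRkk (abs_nonneg (R k j))
      linarith
  refine ⟨fun k => ?_, fun k j h => ?_⟩
  · have hoff : ∀ l : Fin N, (l : ℕ) < (k : ℕ) → |R l k| ≤ 3 * ε k :=
      fun l hl => main (l : ℕ) l k rfl hl
    have hd := diag k hoff
    have hεNk : ε k ≤ C * (N : ℝ) ^ γ / m := by
      have hpow : (((k : ℕ) + 1 : ℕ) : ℝ) ^ γ ≤ (N : ℝ) ^ γ :=
        Real.rpow_le_rpow (le_of_lt (hbase_pos k)) (hbaseN k) hγ
      simp only [hεdef]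
      gcongr
    have h4 : 0 ≤ 4 * C * (N : ℝ) ^ ((1 : ℝ) + γ) / m := by positivity
    have h5 : 0 ≤ C * (N : ℝ) ^ γ / m := by positivity
    have h6 : 3 * C * (N : ℝ) ^ γ / m = 3 * (C * (N : ℝ) ^ γ / m) := by ring
    linarith
  · have h1 := main (k : ℕ) k j rfl h
    have h2 : (3 : ℝ) * ε j = 3 * C * (((j : ℕ) + 1 : ℕ) : ℝ) ^ γ / m := by
      simp only [hεdef]; ring
    linarith
end
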